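/- arXiv:1502.06039 — 4 statements merged into one kernel-verified Lean document; each statement's English description precedes it below -/
import Mathlib

section
/- Let G be the group with presentation ⟨a, b | w^q a = b w^q⟩ where w = b a⁻¹ b⁻¹ a and q is a positive integer. Then the quotient of G by the normal closure of the element w^q · a is the trivial group. -/
/-- The relator set of the twist knot group `⟨a, b | wᵠ a = b wᵠ⟩`,
where `a = of true`, `b = of false`, `w = b a⁻¹ b⁻¹ a`. -/
def twistRels (q : ℤ) : Set (FreeGroup Bool) :=
  { (FreeGroup.of false * (FreeGroup.of true)⁻¹ * (FreeGroup.of false)⁻¹ *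
      FreeGroup.of true) ^ q * FreeGroup.of true *
    (FreeGroup.of false *
      (FreeGroup.of false * (FreeGroup.of true)⁻¹ * (FreeGroup.of false)⁻¹ *
        FreeGroup.of true) ^ q)⁻¹ }

/-!
Modulo `wᵠ a`, the defining relation `wᵠ a = b wᵠ` makes both `a` and `b` equal to `w⁻ᵠ`;
but then `w = b a⁻¹ b⁻¹ a` is trivial, hence so are `a` and `b`, and these generate.
-/

open PresentedGroup in
theorem twistRels_relation (q : ℤ) :
    (of false * (of true)⁻¹ * (of false)⁻¹ * of true : PresentedGroup (twistRels q)) ^ q *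
      of true = of false * (of false * (of true)⁻¹ * (of false)⁻¹ * of true) ^ q :=
  mul_inv_eq_one.mp (PresentedGroup.one_of_mem rfl)

theorem eq_one_of_twist_relation {H : Type*} [Group H] {a b : H} {q : ℤ}
    (hrel : (b * a⁻¹ * b⁻¹ * a) ^ q * a = b * (b * a⁻¹ * b⁻¹ * a) ^ q)
    (hkill : (b * a⁻¹ * b⁻¹ * a) ^ q * a = 1) : a = 1 ∧ b = 1 := by
  have ha : a = ((b * a⁻¹ * b⁻¹ * a) ^ q)⁻¹ := eq_inv_of_mul_eq_one_right hkill
  have hb : b = ((b * a⁻¹ * b⁻¹ * a) ^ q)⁻¹ := eq_inv_of_mul_eq_one_left (hrel ▸ hkill)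
  obtain rfl : a = b := ha.trans hb.symm
  have hw : a * a⁻¹ * a⁻¹ * a = 1 := by group
  rw [hw, one_zpow, one_mul] at hkill
  exact ⟨hkill, hkill⟩

open PresentedGroup in
theorem twistRels_hom_eq_one {H : Type*} [Group H] {q : ℤ} (f : PresentedGroup (twistRels q) →* H)
    (hf : f ((of false * (of true)⁻¹ * (of false)⁻¹ * of true) ^ q * of true) = 1) : f = 1 := by
  have hrel := congrArg f (twistRels_relation q)
  simp only [map_mul, map_inv, map_zpow] at hf hrel
  obtain ⟨ha, hb⟩ := eq_one_of_twist_relation hrel hf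
  refine PresentedGroup.ext fun j => ?_
  cases j
  exacts [hb, ha]

theorem stmt_0_general (q : ℤ) :
    ∀ x : PresentedGroup (twistRels q) ⧸
      Subgroup.normalClosure
        {((PresentedGroup.of false * (PresentedGroup.of true)⁻¹ *
            (PresentedGroup.of false)⁻¹ * PresentedGroup.of true :
              PresentedGroup (twistRels q)) ^ q * PresentedGroup.of true)},
    x = 1 := by
  intro x
  induction x using QuotientGroup.induction_on with | H g => ?_
  exact DFunLike.congr_fun (twistRels_hom_eq_one (QuotientGroup.mk' _)
    ((QuotientGroup.eq_one_iff _).mpr (Subgroup.subset_normalClosure (Set.mem_singleton _)))) g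

theorem stmt_0 (q : ℤ) (hq : 0 < q) :
    ∀ x : PresentedGroup (twistRels q) ⧸
      Subgroup.normalClosure
        {((PresentedGroup.of false * (PresentedGroup.of true)⁻¹ *
            (PresentedGroup.of false)⁻¹ * PresentedGroup.of true :
              PresentedGroup (twistRels q)) ^ q * PresentedGroup.of true)},
    x = 1 :=
  stmt_0_general q
end

section
/- In the group G = ⟨a, b | w^q a = b w^q⟩ with w = [b, a⁻¹] and q > 0, setting g₁ = w^q a, g₂ = a⁻¹ g₁ a, g₃ = a g₁ a⁻¹, the element a equals (g₂ g₁⁻¹ g₃ g₁⁻¹)^{q-1} g₂ g₁⁻¹ g₃. Consequently G is generated by the three conjugate elements g₁, g₂, g₃. -/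
theorem stmt_2 (q : ℤ) (hq : 0 < q)
    (a b w g₁ g₂ g₃ : PresentedGroup (twistRels q))
    (ha : a = PresentedGroup.of true) (hb : b = PresentedGroup.of false)
    (hw : w = b * a⁻¹ * b⁻¹ * a)
    (hg₁ : g₁ = w ^ q * a) (hg₂ : g₂ = a⁻¹ * g₁ * a) (hg₃ : g₃ = a * g₁ * a⁻¹) :
    a = (g₂ * g₁⁻¹ * g₃ * g₁⁻¹) ^ (q - 1) * g₂ * g₁⁻¹ * g₃ ∧
    Subgroup.closure {g₁, g₂, g₃} = (⊤ : Subgroup (PresentedGroup (twistRels q))) := by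
  -- Derive the defining relation `w ^ q * a = b * w ^ q`.
  have hrel : w ^ q * a = b * w ^ q := by
    have hmem : ((FreeGroup.of false * (FreeGroup.of true)⁻¹ * (FreeGroup.of false)⁻¹ *
        FreeGroup.of true) ^ q * FreeGroup.of true *
        (FreeGroup.of false *
          (FreeGroup.of false * (FreeGroup.of true)⁻¹ * (FreeGroup.of false)⁻¹ *
            FreeGroup.of true) ^ q)⁻¹) ∈ twistRels q := rfl
    have h1 : PresentedGroup.mk (twistRels q)
        ((FreeGroup.of false * (FreeGroup.of true)⁻¹ * (FreeGroup.of false)⁻¹ *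
        FreeGroup.of true) ^ q * FreeGroup.of true *
        (FreeGroup.of false *
          (FreeGroup.of false * (FreeGroup.of true)⁻¹ * (FreeGroup.of false)⁻¹ *
            FreeGroup.of true) ^ q)⁻¹) = 1 :=
      (QuotientGroup.eq_one_iff _).mpr (Subgroup.subset_normalClosure hmem)
    simp only [map_mul, map_zpow, map_inv] at h1
    rw [hw, ha, hb]
    exact mul_inv_eq_one.mp h1
  have hc : w ^ q * a * (w ^ q)⁻¹ = b := by rw [hrel]; group
  have hc2 : w ^ q * a⁻¹ * (w ^ q)⁻¹ = b⁻¹ := by rw [← hc]; group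
  have e₂ : g₂ * g₁⁻¹ = a⁻¹ * b := by
    have h : g₂ * g₁⁻¹ = a⁻¹ * (w ^ q * a * (w ^ q)⁻¹) := by rw [hg₂, hg₁]; group
    rw [h, hc]
  have e₃ : g₃ * g₁⁻¹ = a * b⁻¹ := by
    have h : g₃ * g₁⁻¹ = a * (w ^ q * a⁻¹ * (w ^ q)⁻¹) := by rw [hg₃, hg₁]; group
    rw [h, hc2]
  have hbase : g₂ * g₁⁻¹ * g₃ * g₁⁻¹ = w⁻¹ := by
    have h : g₂ * g₁⁻¹ * g₃ * g₁⁻¹ = (g₂ * g₁⁻¹) * (g₃ * g₁⁻¹) := by group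
    rw [h, e₂, e₃, hw]; group
  have hhead : g₂ * g₁⁻¹ * g₃ = a⁻¹ * b * a * w ^ q := by
    have h : g₂ * g₁⁻¹ * g₃ = (g₂ * g₁⁻¹) * g₃ := rfl
    rw [h, e₂, hg₃, hg₁]; group
  have haba : a⁻¹ * b * a = w⁻¹ * b := by rw [hw]; group
  have main : a = (g₂ * g₁⁻¹ * g₃ * g₁⁻¹) ^ (q - 1) * g₂ * g₁⁻¹ * g₃ := by
    have h : (g₂ * g₁⁻¹ * g₃ * g₁⁻¹) ^ (q - 1) * g₂ * g₁⁻¹ * g₃ =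
        (g₂ * g₁⁻¹ * g₃ * g₁⁻¹) ^ (q - 1) * (g₂ * g₁⁻¹ * g₃) := by group
    rw [h, hbase, hhead, haba]
    have h2 : (w⁻¹) ^ (q - 1) * (w⁻¹ * b * w ^ q) = (w ^ q)⁻¹ * (b * w ^ q) := by group
    rw [h2, ← hrel]; group
  refine ⟨main, ?_⟩
  -- The subgroup generated by g₁, g₂, g₃ is everything.
  have hg₁m : g₁ ∈ Subgroup.closure ({g₁, g₂, g₃} : Set (PresentedGroup (twistRels q))) :=
    Subgroup.subset_closure (by simp)
  have hg₂m : g₂ ∈ Subgroup.closure ({g₁, g₂, g₃} : Set (PresentedGroup (twistRels q))) :=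
    Subgroup.subset_closure (by simp)
  have hg₃m : g₃ ∈ Subgroup.closure ({g₁, g₂, g₃} : Set (PresentedGroup (twistRels q))) :=
    Subgroup.subset_closure (by simp)
  have ham : a ∈ Subgroup.closure ({g₁, g₂, g₃} : Set (PresentedGroup (twistRels q))) := by
    rw [main]
    exact mul_mem (mul_mem (mul_mem (zpow_mem (mul_mem (mul_mem (mul_mem hg₂m
      (inv_mem hg₁m)) hg₃m) (inv_mem hg₁m)) _) hg₂m) (inv_mem hg₁m)) hg₃m
  have hbm : b ∈ Subgroup.closure ({g₁, g₂, g₃} : Set (PresentedGroup (twistRels q))) := by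
    have hb' : b = g₁ * g₃⁻¹ * a := by
      rw [hg₃, hg₁, ← hc]; group
    rw [hb']
    exact mul_mem (mul_mem hg₁m (inv_mem hg₃m)) ham
  rw [eq_top_iff, ← PresentedGroup.closure_range_of (twistRels q)]
  apply Subgroup.closure_le _ |>.mpr
  rintro x ⟨y, rfl⟩
  cases y
  · rw [← hb]; exact hbm
  · rw [← ha]; exact ham
end

section
/- Every free group is residually solvable: for a free group F, the intersection of all terms F⁽ⁿ⁾ of its derived series is the trivial subgroup. -/
/-!
Write `x ≠ 1` as a product of syllables `a₁ ^ e₁ ⋯ a_k ^ e_k` with consecutive letters distinct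
and all `eᵢ ≠ 0`. Send each generator `a` to `1 + N_a` in `GL_{k+1}(ℤ)`, where `N_a` has a `1` at
`(i - 1, i)` whenever `aᵢ = a`. As consecutive letters differ, `N_a ^ 2 = 0`, so
`a ^ e ↦ 1 + e N_a`, and the `(0, k)` entry of the image of `x` is `e₁ ⋯ e_k ≠ 0`. The image lies
in the unitriangular group, filtered by the subgroups `U_j` of those `u` with `u - 1` vanishing
below the `j`-th superdiagonal; since `⁅U_j, U_l⁆ ≤ U_{j+l}`, the `m`-th derived subgroup maps
into `U_{2^m}`, which is trivial once `2 ^ m > k`.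
-/

open scoped commutatorElement

theorem map_derivedSeries_le_of_range_le {G H : Type*} [Group G] [Group H]
    (K : ℕ → Subgroup H) (hK : ∀ j l, ⁅K j, K l⁆ ≤ K (j + l)) (f : G →* H) (hf : f.range ≤ K 1)
    (m : ℕ) : (derivedSeries G m).map f ≤ K (2 ^ m) := by
  induction m with
  | zero => rwa [derivedSeries_zero, ← MonoidHom.range_eq_map]
  | succ m ih =>
    rw [derivedSeries_succ, Subgroup.map_commutator, pow_succ, mul_two]
    exact (Subgroup.commutator_mono ih ih).trans (hK _ _)

namespace Units

variable {A : Type*} [Ring A]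

theorem val_mul_sub_one (u v : Aˣ) :
    ((u * v : Aˣ) : A) - 1 = (u - 1) * (v - 1) + (u - 1) + (v - 1) := by
  rw [val_mul]; noncomm_ring

theorem val_inv_sub_one (u : Aˣ) : ((u⁻¹ : Aˣ) : A) - 1 = -(↑u⁻¹ * (u - 1)) := by
  rw [mul_sub, inv_mul, mul_one, neg_sub]

theorem val_commutatorElement_sub_one (u v : Aˣ) :
    ((⁅u, v⁆ : Aˣ) : A) - 1 = ((u - 1) * (v - 1) - (v - 1) * (u - 1)) * ↑(u⁻¹ * v⁻¹) := by
  have h : (v * u : A) * ↑(u⁻¹ * v⁻¹) = 1 := by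
    rw [← val_mul, ← val_mul]; simp [mul_assoc]
  calc ((⁅u, v⁆ : Aˣ) : A) - 1 = (u * v - v * u : A) * ↑(u⁻¹ * v⁻¹) := by
        rw [sub_mul, h, commutatorElement_def]; simp only [val_mul, mul_assoc]
    _ = _ := by noncomm_ring

variable {N : A}

def oneAddOfSqZero (hN : N * N = 0) : Aˣ where
  val := 1 + N
  inv := 1 - N
  val_inv := by rw [add_mul, mul_sub, mul_sub, hN]; noncomm_ring
  inv_val := by rw [sub_mul, mul_add, mul_add, hN]; noncomm_ring

theorem val_oneAddOfSqZero (hN : N * N = 0) : (oneAddOfSqZero hN : A) = 1 + N := rfl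

theorem val_inv_oneAddOfSqZero (hN : N * N = 0) : (↑(oneAddOfSqZero hN)⁻¹ : A) = 1 - N := rfl

theorem val_oneAddOfSqZero_zpow (hN : N * N = 0) (e : ℤ) :
    ((oneAddOfSqZero hN ^ e : Aˣ) : A) = 1 + e • N := by
  induction e using Int.induction_on with
  | zero => simp
  | succ e ih =>
    rw [zpow_add_one, val_mul, ih, val_oneAddOfSqZero]
    simp only [mul_add, add_mul, mul_one, one_mul, smul_mul_assoc, hN, smul_zero, add_smul,
      one_smul]
    abel
  | pred e ih =>
    rw [zpow_sub_one, val_mul, ih, val_inv_oneAddOfSqZero]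
    simp only [mul_sub, add_mul, mul_one, one_mul, smul_mul_assoc, hN, smul_zero, sub_smul,
      one_smul]
    abel

end Units

namespace Matrix

variable {R : Type*} {n : ℕ}

def IsUpperBy [Zero R] (j : ℕ) (M : Matrix (Fin n) (Fin n) R) : Prop :=
  ∀ r s : Fin n, (s : ℕ) < r + j → M r s = 0

namespace IsUpperBy

variable {i j l : ℕ} {A B : Matrix (Fin n) (Fin n) R}

theorem mono [Zero R] (h : IsUpperBy j A) (hij : i ≤ j) : IsUpperBy i A :=
  fun r s hrs => h r s (by omega)

theorem add [AddZeroClass R] (hA : IsUpperBy j A) (hB : IsUpperBy j B) : IsUpperBy j (A + B) :=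
  fun r s hrs => by rw [add_apply, hA r s hrs, hB r s hrs, add_zero]

theorem sub [AddGroup R] (hA : IsUpperBy j A) (hB : IsUpperBy j B) : IsUpperBy j (A - B) :=
  fun r s hrs => by rw [sub_apply, hA r s hrs, hB r s hrs, sub_zero]

theorem neg [SubtractionMonoid R] (hA : IsUpperBy j A) : IsUpperBy j (-A) :=
  fun r s hrs => by rw [neg_apply, hA r s hrs, neg_zero]

theorem mul [NonUnitalNonAssocSemiring R] (hA : IsUpperBy j A) (hB : IsUpperBy l B) :
    IsUpperBy (j + l) (A * B) := by
  intro r s hrs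
  rw [mul_apply]
  refine Finset.sum_eq_zero fun t _ => ?_
  by_cases hrt : (t : ℕ) < r + j
  · rw [hA r t hrt, zero_mul]
  · rw [hB t s (by omega), mul_zero]

theorem eq_zero [Zero R] (h : IsUpperBy n A) : A = 0 :=
  ext fun r s => h r s (by omega)

end IsUpperBy

theorem isUpperBy_one [Zero R] [One R] : IsUpperBy 0 (1 : Matrix (Fin n) (Fin n) R) :=
  fun _ _ hrs => one_apply_ne (by omega)

theorem isUpperBy_zero_iff_blockTriangular [Zero R] {A : Matrix (Fin n) (Fin n) R} :
    IsUpperBy 0 A ↔ A.BlockTriangular id :=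
  ⟨fun h r s hsr => h r s hsr, fun h r s hsr => h (show s < r from hsr)⟩

theorem isUpperBy_zero_of_sub_one [Ring R] {j : ℕ} {A : Matrix (Fin n) (Fin n) R}
    (h : IsUpperBy j (A - 1)) : IsUpperBy 0 A := by
  simpa using isUpperBy_one.add (h.mono j.zero_le)

theorem IsUpperBy.units_inv [CommRing R] {u : (Matrix (Fin n) (Fin n) R)ˣ}
    (hu : IsUpperBy 0 (u : Matrix (Fin n) (Fin n) R)) :
    IsUpperBy 0 (↑u⁻¹ : Matrix (Fin n) (Fin n) R) := by
  let := u.invertible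
  rw [isUpperBy_zero_iff_blockTriangular] at hu ⊢
  rw [coe_units_inv]
  exact blockTriangular_inv_of_blockTriangular hu

/-- Only the path `0 → 1 → ⋯ → k` along the superdiagonals contributes to the entries `(0, s)`,
`s ≥ k`, of a product of `k` matrices with nothing above the superdiagonal. -/
theorem list_prod_apply_eq_prod_superdiag [CommSemiring R] (L : List (Matrix (Fin n) (Fin n) R))
    (d : ℕ → R) (h_zero : ∀ M ∈ L, ∀ r s : Fin n, (r : ℕ) + 1 < s → M r s = 0)
    (h_super : ∀ i (hi : i < L.length) (r s : Fin n), (r : ℕ) = i → (s : ℕ) = i + 1 →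
      L[i] r s = d i)
    (r s : Fin n) (hr : (r : ℕ) = 0) (hs : L.length ≤ s) :
    L.prod r s = if (s : ℕ) = L.length then ∏ i ∈ Finset.range L.length, d i else 0 := by
  induction L using List.reverseRecOn generalizing s with
  | nil =>
    simp only [List.prod_nil, List.length_nil, Finset.range_zero, Finset.prod_empty]
    by_cases h : (s : ℕ) = 0
    · rw [if_pos h, show r = s from Fin.ext (hr.trans h.symm), one_apply_eq]
    · rw [if_neg h, one_apply_ne fun hrs => h (by rw [← hrs, hr])]
  | append_singleton L M ih =>
    simp only [List.length_append, List.length_singleton] at hs ⊢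
    have hM_zero := h_zero M (by simp)
    have ih := ih (fun N hN => h_zero N (List.mem_append_left _ hN)) fun i hi r s hri hsi => by
      rw [← h_super i (by simp; omega) r s hri hsi, List.getElem_append_left]
    have hL : L.length < n := by omega
    rw [List.prod_append, List.prod_singleton, mul_apply,
      Finset.sum_eq_single_of_mem ⟨L.length, hL⟩ (Finset.mem_univ _)]
    · rw [ih ⟨L.length, hL⟩ le_rfl, if_pos rfl]
      by_cases hs' : (s : ℕ) = L.length + 1
      · rw [if_pos hs', Finset.prod_range_succ,
          ← h_super L.length (by simp) ⟨L.length, hL⟩ s rfl hs', List.getElem_concat_length rfl]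
      · rw [if_neg hs', hM_zero _ _ (by dsimp only; omega), mul_zero]
    · intro t _ ht
      by_cases htL : L.length ≤ t
      · rw [ih t htL, if_neg fun h => ht (Fin.ext h), zero_mul]
      · rw [hM_zero t s (by omega), mul_zero]

variable [CommRing R]

variable (R n) in
def upperFiltration (j : ℕ) : Subgroup (Matrix (Fin n) (Fin n) R)ˣ where
  carrier := {u | IsUpperBy j (u - 1 : Matrix (Fin n) (Fin n) R)}
  one_mem' := by simp [IsUpperBy]
  mul_mem' {u v} hu hv := by
    rw [Set.mem_ofPred_eq, Units.val_mul_sub_one]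
    exact (((hu.mul hv).mono (by omega)).add hu).add hv
  inv_mem' {u} hu := by
    rw [Set.mem_ofPred_eq, Units.val_inv_sub_one, ← zero_add j]
    exact ((isUpperBy_zero_of_sub_one hu).units_inv.mul hu).neg

theorem commutator_upperFiltration_le (j l : ℕ) :
    ⁅upperFiltration R n j, upperFiltration R n l⁆ ≤ upperFiltration R n (j + l) := by
  refine Subgroup.commutator_le.2 fun u hu v hv => ?_
  have huv : IsUpperBy 0 (↑(u⁻¹ * v⁻¹) : Matrix (Fin n) (Fin n) R) := by
    rw [Units.val_mul]
    exact (isUpperBy_zero_of_sub_one hu).units_inv.mul (isUpperBy_zero_of_sub_one hv).units_inv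
  show IsUpperBy _ _
  rw [Units.val_commutatorElement_sub_one, ← add_zero (j + l)]
  exact ((hu.mul hv).sub (add_comm j l ▸ hv.mul hu)).mul huv

theorem upperFiltration_eq_bot {j : ℕ} (hj : n ≤ j) : upperFiltration R n j = ⊥ :=
  (Subgroup.eq_bot_iff_forall _).2 fun _ hu =>
    Units.ext <| sub_eq_zero.1 (IsUpperBy.eq_zero (IsUpperBy.mono hu hj))

end Matrix

namespace FreeGroup

variable {α : Type*}

def syllableProd (S : List (α × ℤ)) : FreeGroup α := (S.map fun p => of p.1 ^ p.2).prod

def IsSyllableForm (S : List (α × ℤ)) : Prop :=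
  (S.map Prod.fst).IsChain (· ≠ ·) ∧ ∀ p ∈ S, p.2 ≠ 0

theorem exists_isSyllableForm_zpow_mul {S : List (α × ℤ)} (hS : IsSyllableForm S) (a : α)
    (k : ℤ) : ∃ S', IsSyllableForm S' ∧ syllableProd S' = of a ^ k * syllableProd S := by
  rcases eq_or_ne k 0 with rfl | hk
  · exact ⟨S, hS, by rw [zpow_zero, one_mul]⟩
  rcases S with _ | ⟨⟨b, e⟩, T⟩
  · exact ⟨[(a, k)], ⟨List.isChain_singleton _, by simpa⟩, by simp [syllableProd]⟩
  obtain ⟨hchain, hne⟩ := hS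
  have hT : IsSyllableForm T := ⟨hchain.tail, fun p hp => hne p (List.mem_cons_of_mem _ hp)⟩
  have hprod : syllableProd ((b, e) :: T) = of b ^ e * syllableProd T := rfl
  rcases eq_or_ne b a with rfl | hba
  · rcases eq_or_ne (k + e) 0 with hke | hke
    · exact ⟨T, hT, by rw [hprod, ← mul_assoc, ← zpow_add, hke, zpow_zero, one_mul]⟩
    · refine ⟨(b, k + e) :: T, ⟨hchain, ?_⟩, ?_⟩
      · rintro p (_ | ⟨_, hp⟩)
        exacts [hke, hT.2 p hp]
      · rw [hprod, ← mul_assoc, ← zpow_add]; rfl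
  · refine ⟨(a, k) :: (b, e) :: T, ⟨List.isChain_cons_cons.2 ⟨hba.symm, hchain⟩, ?_⟩, rfl⟩
    rintro p (_ | ⟨_, hp⟩)
    exacts [hk, hne p hp]

theorem exists_isSyllableForm (x : FreeGroup α) : ∃ S, IsSyllableForm S ∧ syllableProd S = x := by
  have hx : x ∈ Subgroup.closure (Set.range of) := by rw [closure_range_of]; trivial
  induction hx using Subgroup.closure_induction_left with
  | one => exact ⟨[], ⟨List.isChain_nil, by simp⟩, rfl⟩
  | mul_left _ ha y _ ih =>
    obtain ⟨a, rfl⟩ := ha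
    obtain ⟨S, hS, rfl⟩ := ih
    simpa using exists_isSyllableForm_zpow_mul hS a 1
  | inv_mul_cancel _ ha y _ ih =>
    obtain ⟨a, rfl⟩ := ha
    obtain ⟨S, hS, rfl⟩ := ih
    simpa using exists_isSyllableForm_zpow_mul hS a (-1)

open Matrix (IsUpperBy upperFiltration)

variable [DecidableEq α]

section Ring

variable (R : Type*) [Ring R] (n : ℕ) {w : List α}

def letterMatrix (w : List α) (a : α) : Matrix (Fin n) (Fin n) R :=
  Matrix.of fun r s => if (s : ℕ) = r + 1 ∧ w[(r : ℕ)]? = some a then 1 else 0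

variable {R n}

theorem letterMatrix_mul_self (hw : w.IsChain (· ≠ ·)) (a : α) :
    letterMatrix R n w a * letterMatrix R n w a = 0 := by
  ext r s
  rw [Matrix.mul_apply]
  refine Finset.sum_eq_zero fun t _ => ?_
  simp only [letterMatrix, Matrix.of_apply]
  split_ifs with hrt hts
  · obtain ⟨ht, hr⟩ := hrt
    rw [ht] at hts
    obtain ⟨_, rfl⟩ := List.getElem?_eq_some_iff.1 hr
    obtain ⟨ht', he⟩ := List.getElem?_eq_some_iff.1 hts.2
    exact absurd he.symm (List.isChain_iff_getElem.1 hw r ht')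
  all_goals simp

theorem isUpperBy_letterMatrix (a : α) : IsUpperBy 1 (letterMatrix R n w a) :=
  fun _ _ hrs => if_neg fun h => by omega

variable (R n) in
def letterRep (hw : w.IsChain (· ≠ ·)) : FreeGroup α →* (Matrix (Fin n) (Fin n) R)ˣ :=
  lift fun a => Units.oneAddOfSqZero (letterMatrix_mul_self hw a)

theorem letterRep_of_zpow (hw : w.IsChain (· ≠ ·)) (a : α) (e : ℤ) :
    (letterRep R n hw (of a ^ e)).val = 1 + e • letterMatrix R n w a := by
  rw [map_zpow, letterRep, lift_apply_of, Units.val_oneAddOfSqZero_zpow]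

end Ring

variable {R : Type*} [CommRing R] {n : ℕ} {w : List α}

theorem range_letterRep_le (hw : w.IsChain (· ≠ ·)) :
    (letterRep R n hw).range ≤ upperFiltration R n 1 := by
  refine range_lift_le ?_
  rintro _ ⟨a, rfl⟩
  show IsUpperBy 1 ((1 + letterMatrix R n w a) - 1)
  rw [add_sub_cancel_left]
  exact isUpperBy_letterMatrix a

theorem letterRep_eq_one_of_mem_derivedSeries (hw : w.IsChain (· ≠ ·)) {g : FreeGroup α}
    (hg : g ∈ derivedSeries (FreeGroup α) n) : letterRep R n hw g = 1 := by
  have h := map_derivedSeries_le_of_range_le _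
    (Matrix.commutator_upperFiltration_le (R := R) (n := n)) _ (range_letterRep_le hw) n
  rw [Matrix.upperFiltration_eq_bot n.lt_two_pow_self.le] at h
  exact Subgroup.mem_bot.1 (h ⟨g, hg, rfl⟩)

theorem letterRep_syllableProd_apply_ne_zero [IsDomain R] [CharZero R] {S : List (α × ℤ)}
    (hS : IsSyllableForm S) :
    (letterRep R (S.length + 1) hS.1 (syllableProd S)).val 0 (Fin.last S.length) ≠ 0 := by
  have hval : (letterRep R (S.length + 1) hS.1 (syllableProd S)).val =
      (S.map fun p => 1 + p.2 • letterMatrix R (S.length + 1) (S.map Prod.fst) p.1).prod := by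
    rw [syllableProd, ← Units.coeHom_apply, map_list_prod, map_list_prod, List.map_map,
      List.map_map]
    exact congrArg _ (List.map_congr_left fun p _ => letterRep_of_zpow hS.1 p.1 p.2)
  rw [hval, Matrix.list_prod_apply_eq_prod_superdiag _
    (fun i => ((S[i]?).map fun p => (p.2 : R)).getD 0)]
  · rw [List.length_map, if_pos (by simp), Finset.prod_ne_zero_iff]
    intro i hi
    rw [List.getElem?_eq_getElem (Finset.mem_range.1 hi), Option.map_some, Option.getD_some]
    exact_mod_cast hS.2 _ (List.getElem_mem _)
  · simp only [List.mem_map]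
    rintro _ ⟨p, _, rfl⟩ r s hrs
    simp [letterMatrix, Matrix.one_apply_ne (show r ≠ s by omega), show (s : ℕ) ≠ r + 1 by omega]
  · intro i hi r s hr hs
    rw [List.length_map] at hi
    have hletter : (S.map Prod.fst)[(r : ℕ)]? = some S[i].1 := by
      rw [hr, List.getElem?_map, List.getElem?_eq_getElem hi, Option.map_some]
    rw [List.getElem_map, List.getElem?_eq_getElem hi, Option.map_some, Option.getD_some,
      Matrix.add_apply, Matrix.one_apply_ne (show r ≠ s by omega), Matrix.smul_apply, letterMatrix,
      Matrix.of_apply, if_pos ⟨by omega, hletter⟩, zero_add, zsmul_eq_mul, mul_one]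
  · rfl
  · simp

end FreeGroup

theorem stmt_10 (α : Type*) :
    (⨅ n : ℕ, derivedSeries (FreeGroup α) n) = ⊥ := by
  classical
  refine (Subgroup.eq_bot_iff_forall _).2 fun x hx => ?_
  obtain ⟨S, hS, rfl⟩ := FreeGroup.exists_isSyllableForm x
  have hρ := FreeGroup.letterRep_eq_one_of_mem_derivedSeries (R := ℤ) hS.1
    (Subgroup.mem_iInf.1 hx (S.length + 1))
  by_contra hne
  have hS0 : S.length ≠ 0 := fun h => hne (by rw [List.length_eq_zero_iff.1 h]; rfl)
  apply FreeGroup.letterRep_syllableProd_apply_ne_zero (R := ℤ) hS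
  rw [hρ, Units.val_one, Matrix.one_apply_ne (Fin.ext_iff.not.2 (Ne.symm hS0))]
end

section
/- Let the map f from the free group on x₁,…,x₂₄ to the trefoil group G(T) = ⟨y₁, y₂ | y₁y₂y₁ = y₂y₁y₂⟩ be defined by f(x₁) = y₁y₂y₁⁻¹y₂y₁⁻¹, f(x₆) = y₁y₂⁻¹y₁y₂y₁⁻¹y₂y₁⁻¹y₂y₁⁻¹, f(x₁₈) = y₂²y₁⁻¹. Then f(x₁₈ x₆ x₁⁻¹ x₁⁻¹ x₁₈ x₆ x₁⁻¹) = y₁ and f(x₁ x₆⁻¹ x₁₈⁻¹ x₁ x₁₈ x₆ x₁⁻² x₁₈ x₆ x₁⁻¹) = y₂ in G(T). -/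
/-! With `u := f(x₁₈ x₆ x₁⁻¹)`, both words are free consequences of `u = y₁ y₂ y₁⁻¹` and
`f(x₁) = u y₂ y₁⁻¹`: the first word is `u f(x₁)⁻¹ u = u y₁ y₂⁻¹ = y₁`, the second is
`u⁻¹ f(x₁)` times the first, i.e. `y₂ y₁⁻¹ y₁ = y₂`. The braid relation is needed only once,
to identify `u = y₂ y₁ y₂ y₁⁻²` with `y₁ y₂ y₁⁻¹`. -/

/-- The relator set of the trefoil knot group `⟨y₁, y₂ | y₁y₂y₁ = y₂y₁y₂⟩`,
with `y₁ = of true`, `y₂ = of false`. -/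
def trefoilRels : Set (FreeGroup Bool) :=
  { FreeGroup.of true * FreeGroup.of false * FreeGroup.of true *
    (FreeGroup.of false * FreeGroup.of true * FreeGroup.of false)⁻¹ }

theorem PresentedGroup.trefoil_braid :
    (of true : PresentedGroup trefoilRels) * of false * of true = of false * of true * of false :=
  mk_eq_mk_of_mul_inv_mem rfl

section Braid

variable {G : Type*} [Group G] {a b : G}

theorem mul_mul_inv_eq_of_braid (h : a * b * a = b * a * b) :
    b ^ 2 * a⁻¹ * (a * b⁻¹ * a * b * a⁻¹ * b * a⁻¹ * b * a⁻¹) * (a * b * a⁻¹ * b * a⁻¹)⁻¹ =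
      a * b * a⁻¹ :=
  calc _ = b * a * b * a⁻¹ * a⁻¹ := by group
    _ = a * b * a⁻¹ := by rw [← h]; group

theorem words_eq_of_conj {f₁ f₆ f₁₈ : G} (hf₁ : f₁ = a * b * a⁻¹ * b * a⁻¹)
    (hu : f₁₈ * f₆ * f₁⁻¹ = a * b * a⁻¹) :
    f₁₈ * f₆ * f₁⁻¹ * f₁⁻¹ * f₁₈ * f₆ * f₁⁻¹ = a ∧
    f₁ * f₆⁻¹ * f₁₈⁻¹ * f₁ * f₁₈ * f₆ * f₁⁻¹ * f₁⁻¹ * f₁₈ * f₆ * f₁⁻¹ = b := by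
  have hw₁ : f₁₈ * f₆ * f₁⁻¹ * f₁⁻¹ * f₁₈ * f₆ * f₁⁻¹ = a :=
    calc _ = (f₁₈ * f₆ * f₁⁻¹) * f₁⁻¹ * (f₁₈ * f₆ * f₁⁻¹) := by group
      _ = a := by rw [hu, hf₁]; group
  refine ⟨hw₁, ?_⟩
  calc _ = (f₁₈ * f₆ * f₁⁻¹)⁻¹ * f₁ * (f₁₈ * f₆ * f₁⁻¹ * f₁⁻¹ * f₁₈ * f₆ * f₁⁻¹) := by group
    _ = b := by rw [hw₁, hu, hf₁]; group

end Braid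

theorem stmt_17 (y₁ y₂ fx₁ fx₆ fx₁₈ : PresentedGroup trefoilRels)
    (hy₁ : y₁ = PresentedGroup.of true) (hy₂ : y₂ = PresentedGroup.of false)
    (hfx₁ : fx₁ = y₁ * y₂ * y₁⁻¹ * y₂ * y₁⁻¹)
    (hfx₆ : fx₆ = y₁ * y₂⁻¹ * y₁ * y₂ * y₁⁻¹ * y₂ * y₁⁻¹ * y₂ * y₁⁻¹)
    (hfx₁₈ : fx₁₈ = y₂ ^ 2 * y₁⁻¹) :
    fx₁₈ * fx₆ * fx₁⁻¹ * fx₁⁻¹ * fx₁₈ * fx₆ * fx₁⁻¹ = y₁ ∧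
    fx₁ * fx₆⁻¹ * fx₁₈⁻¹ * fx₁ * fx₁₈ * fx₆ * fx₁⁻¹ * fx₁⁻¹ * fx₁₈ * fx₆ * fx₁⁻¹ = y₂ := by
  have hbraid : y₁ * y₂ * y₁ = y₂ * y₁ * y₂ := hy₁ ▸ hy₂ ▸ PresentedGroup.trefoil_braid
  refine words_eq_of_conj hfx₁ ?_
  rw [hfx₁₈, hfx₆, hfx₁]
  exact mul_mul_inv_eq_of_braid hbraid
end
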